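/- Every C-compact element of a complete lattice is join-irreducible: if a is C-compact and a ≤ x ∨ y, then a ≤ x or a ≤ y. -/

import Mathlib

/-- A directed complete poset. -/
def Dcpo (P : Type*) [PartialOrder P] : Prop :=
  ∀ D : Set P, D.Nonempty → DirectedOn (· ≤ ·) D → ∃ a, IsLUB D a

/-- A Scott closed set: a lower set closed under suprema of directed subsets. -/
def ScottClosed {P : Type*} [PartialOrder P] (A : Set P) : Prop :=
  IsLowerSet A ∧ ∀ D ⊆ A, D.Nonempty → DirectedOn (· ≤ ·) D → ∀ a, IsLUB D a → a ∈ A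

/-- A nonempty irreducible Scott closed set. -/
def IrrClosed {P : Type*} [PartialOrder P] (A : Set P) : Prop :=
  A.Nonempty ∧ ScottClosed A ∧
    ∀ F₁ F₂ : Set P, ScottClosed F₁ → ScottClosed F₂ → A ⊆ F₁ ∪ F₂ → A ⊆ F₁ ∨ A ⊆ F₂

/-- The lattice `C_σ(P)` of Scott closed subsets, ordered by inclusion. -/
abbrev Cσ (P : Type*) [PartialOrder P] := {A : Set P // ScottClosed A}

/-- The poset `Irr_σ(P)` of nonempty irreducible Scott closed subsets. -/
abbrev Irrσ (P : Type*) [PartialOrder P] := {A : Set P // IrrClosed A}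

/-- An element is down-linear if its principal downset is a chain. -/
def DownLinear {P : Type*} [PartialOrder P] (a : P) : Prop :=
  IsChain (· ≤ ·) (Set.Iic a)

/-- `x` is beneath `y`: for every nonempty Scott closed `S`, `y ≤ ⋁S` implies `x ∈ S`. -/
def Beneath {L : Type*} [CompleteLattice L] (x y : L) : Prop :=
  ∀ S : Set L, S.Nonempty → ScottClosed S → y ≤ sSup S → x ∈ S

/-- An element is C-compact if it is beneath itself. -/
def CCompact {L : Type*} [CompleteLattice L] (x : L) : Prop := Beneath x x

open Set

theorem ScottClosed.union {P : Type*} [PartialOrder P] {s t : Set P} (hs : ScottClosed s)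
    (ht : ScottClosed t) : ScottClosed (s ∪ t) :=
  ⟨hs.1.union ht.1, DirSupClosed.union hs.2 ht.2⟩

theorem scottClosed_Iic {P : Type*} [PartialOrder P] (a : P) : ScottClosed (Iic a) :=
  ⟨isLowerSet_Iic a, dirSupClosed_Iic a⟩

theorem Beneath.le_or_le {L : Type*} [CompleteLattice L] {a b x y : L} (hab : Beneath a b)
    (h : b ≤ x ⊔ y) : a ≤ x ∨ a ≤ y := by
  have hsSup : sSup (Iic x ∪ Iic y) = x ⊔ y := by rw [sSup_union, csSup_Iic, csSup_Iic]
  exact hab _ ⟨x, .inl le_rfl⟩ ((scottClosed_Iic x).union (scottClosed_Iic y)) (hsSup ▸ h)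

/-- every C-compact element of a complete lattice is join-irreducible. -/
theorem stmt11 {L : Type*} [CompleteLattice L] (a : L) (ha : CCompact a)
    (x y : L) (h : a ≤ x ⊔ y) : a ≤ x ∨ a ≤ y :=
  Beneath.le_or_le ha h
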